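/- Define h : ℝ → ℝ by h(r) = r² for r ≤ −1, h(r) = (6r³ + 8r⁴ + 3r⁵)² for −1 < r < 0, and h(r) = 0 for r ≥ 0, and for ε > 0 set h_ε(r) = ε²·h(r/ε). Then: (i) there exists a constant C such that |h_ε''(r)| ≤ C for all ε > 0 and all r ∈ ℝ; (ii) for every r < 0, h_ε''(r) → 2 as ε → 0⁺; and (iii) for every r > 0 and every ε > 0, h_ε''(r) = 0. -/

import Mathlib

open Filter Set

/-- The cutoff function `h` used in the proof of the comparison theorem. -/
noncomputable def h (r : ℝ) : ℝ :=
  if r ≤ -1 then r ^ 2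
  else if r < 0 then (6 * r ^ 3 + 8 * r ^ 4 + 3 * r ^ 5) ^ 2
  else 0

/-- The rescaled cutoff `h_ε(r) = ε² h(r/ε)`. -/
noncomputable def hEps (ε r : ℝ) : ℝ := ε ^ 2 * h (r / ε)

noncomputable def h1 (r : ℝ) : ℝ :=
  if r ≤ -1 then 2 * r
  else if r < 0 then 2 * (6 * r ^ 3 + 8 * r ^ 4 + 3 * r ^ 5) * (18 * r ^ 2 + 32 * r ^ 3 + 15 * r ^ 4)
  else 0

noncomputable def h2 (r : ℝ) : ℝ :=
  if r ≤ -1 then 2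
  else if r < 0 then
    2 * ((18 * r ^ 2 + 32 * r ^ 3 + 15 * r ^ 4) ^ 2
      + (6 * r ^ 3 + 8 * r ^ 4 + 3 * r ^ 5) * (36 * r + 96 * r ^ 2 + 60 * r ^ 3))
  else 0

lemma hasDerivAt_q (x : ℝ) :
    HasDerivAt (fun r : ℝ => 6 * r ^ 3 + 8 * r ^ 4 + 3 * r ^ 5)
      (18 * x ^ 2 + 32 * x ^ 3 + 15 * x ^ 4) x := by
  have := (((hasDerivAt_pow 3 x).const_mul 6).add ((hasDerivAt_pow 4 x).const_mul 8)).add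
    ((hasDerivAt_pow 5 x).const_mul 3)
  convert this using 1 <;> try rfl
  push_cast; ring

lemma hasDerivAt_P (x : ℝ) :
    HasDerivAt (fun r : ℝ => (6 * r ^ 3 + 8 * r ^ 4 + 3 * r ^ 5) ^ 2)
      (2 * (6 * x ^ 3 + 8 * x ^ 4 + 3 * x ^ 5) * (18 * x ^ 2 + 32 * x ^ 3 + 15 * x ^ 4)) x := by
  have := (hasDerivAt_q x).mul (hasDerivAt_q x)
  convert this using 1 <;> try rfl
  · funext r; simp only [Pi.mul_apply]; ring
  · ring

lemma hasDerivAt_q' (x : ℝ) :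
    HasDerivAt (fun r : ℝ => 18 * r ^ 2 + 32 * r ^ 3 + 15 * r ^ 4)
      (36 * x + 96 * x ^ 2 + 60 * x ^ 3) x := by
  have := (((hasDerivAt_pow 2 x).const_mul 18).add ((hasDerivAt_pow 3 x).const_mul 32)).add
    ((hasDerivAt_pow 4 x).const_mul 15)
  convert this using 1 <;> try rfl
  push_cast; ring

lemma hasDerivAt_P' (x : ℝ) :
    HasDerivAt (fun r : ℝ => 2 * (6 * r ^ 3 + 8 * r ^ 4 + 3 * r ^ 5) * (18 * r ^ 2 + 32 * r ^ 3 + 15 * r ^ 4))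
      (2 * ((18 * x ^ 2 + 32 * x ^ 3 + 15 * x ^ 4) ^ 2
        + (6 * x ^ 3 + 8 * x ^ 4 + 3 * x ^ 5) * (36 * x + 96 * x ^ 2 + 60 * x ^ 3))) x := by
  have := (((hasDerivAt_q x).const_mul 2).mul (hasDerivAt_q' x))
  convert this using 1 <;> try rfl
  ring

lemma hasDerivAt_of_left_right {f : ℝ → ℝ} {f' x : ℝ}
    (hl : HasDerivWithinAt f f' (Set.Iic x) x) (hr : HasDerivWithinAt f f' (Set.Ici x) x) :
    HasDerivAt f f' x := by
  rw [← hasDerivWithinAt_univ, ← Set.Iic_union_Ici]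
  exact hl.union hr

-- h equals P on Icc (-1) 0
lemma h_eq_P {r : ℝ} (h1 : -1 ≤ r) (h2 : r ≤ 0) :
    h r = (6 * r ^ 3 + 8 * r ^ 4 + 3 * r ^ 5) ^ 2 := by
  unfold h
  rcases lt_or_eq_of_le h1 with hlt | heq
  · rw [if_neg (by linarith)]
    rcases lt_or_eq_of_le h2 with h2' | h2'
    · rw [if_pos h2']
    · rw [h2']; norm_num
  · rw [← heq]; norm_num

lemma h1_eq_P' {r : ℝ} (hl : -1 ≤ r) (hr : r ≤ 0) :
    h1 r = 2 * (6 * r ^ 3 + 8 * r ^ 4 + 3 * r ^ 5) * (18 * r ^ 2 + 32 * r ^ 3 + 15 * r ^ 4) := by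
  unfold h1
  rcases lt_or_eq_of_le hl with hlt | heq
  · rw [if_neg (by linarith)]
    rcases lt_or_eq_of_le hr with h2' | h2'
    · rw [if_pos h2']
    · rw [h2']; norm_num
  · rw [← heq]; norm_num

lemma h_zero_of_nonneg {r : ℝ} (hr : 0 ≤ r) : h r = 0 := by
  unfold h
  rw [if_neg (by linarith), if_neg (by linarith)]

lemma h1_zero_of_nonneg {r : ℝ} (hr : 0 ≤ r) : h1 r = 0 := by
  unfold h1
  rw [if_neg (by linarith), if_neg (by linarith)]

lemma h_eq_sq {r : ℝ} (hr : r ≤ -1) : h r = r ^ 2 := by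
  unfold h; rw [if_pos hr]

lemma h1_eq_lin {r : ℝ} (hr : r ≤ -1) : h1 r = 2 * r := by
  unfold h1; rw [if_pos hr]

lemma hA (x : ℝ) : HasDerivAt h (h1 x) x := by
  rcases lt_trichotomy x (-1) with hx | hx | hx
  · -- x < -1 : h = r^2 near x
    have heq : h =ᶠ[nhds x] (fun r : ℝ => r ^ 2) := by
      filter_upwards [Iio_mem_nhds hx] with r hr
      exact h_eq_sq (le_of_lt hr)
    have : HasDerivAt (fun r : ℝ => r ^ 2) (h1 x) x := by
      have := hasDerivAt_pow 2 x
      convert this using 1 <;> try rfl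
      rw [h1_eq_lin (le_of_lt hx)]
      push_cast; ring
    exact this.congr_of_eventuallyEq heq
  · -- x = -1
    subst hx
    have hval : h1 (-1 : ℝ) = -2 := by norm_num [h1]
    rw [hval]
    apply hasDerivAt_of_left_right
    · -- left: h = r^2 on Iic (-1)
      have hd : HasDerivWithinAt (fun r : ℝ => r ^ 2) (-2 : ℝ) (Iic (-1 : ℝ)) (-1) := by
        have := (hasDerivAt_pow 2 (-1 : ℝ)).hasDerivWithinAt (s := Iic (-1 : ℝ))
        (convert this using 1 <;> try rfl); norm_num
      apply hd.congr_of_eventuallyEq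
      · filter_upwards [self_mem_nhdsWithin] with r hr
        exact h_eq_sq hr
      · norm_num [h]
    · have hd : HasDerivWithinAt (fun r : ℝ => (6 * r ^ 3 + 8 * r ^ 4 + 3 * r ^ 5) ^ 2)
          (-2 : ℝ) (Ici (-1 : ℝ)) (-1) := by
        have := (hasDerivAt_P (-1 : ℝ)).hasDerivWithinAt (s := Ici (-1 : ℝ))
        (convert this using 1 <;> try rfl); norm_num
      apply hd.congr_of_eventuallyEq
      · have hmem : Ico (-1 : ℝ) 0 ∈ nhdsWithin (-1 : ℝ) (Ici (-1 : ℝ)) :=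
          Ico_mem_nhdsGE (by norm_num)
        filter_upwards [hmem] with r hr
        exact h_eq_P hr.1 hr.2.le
      · norm_num [h]
  · rcases lt_trichotomy x 0 with hx0 | hx0 | hx0
    · -- -1 < x < 0
      have heq : h =ᶠ[nhds x] (fun r : ℝ => (6 * r ^ 3 + 8 * r ^ 4 + 3 * r ^ 5) ^ 2) := by
        filter_upwards [Ioo_mem_nhds hx hx0] with r hr
        exact h_eq_P hr.1.le hr.2.le
      have : HasDerivAt (fun r : ℝ => (6 * r ^ 3 + 8 * r ^ 4 + 3 * r ^ 5) ^ 2) (h1 x) x := by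
        have := hasDerivAt_P x
        convert this using 1 <;> try rfl
        rw [h1_eq_P' hx.le hx0.le]
      exact this.congr_of_eventuallyEq heq
    · -- x = 0
      subst hx0
      have hval : h1 (0 : ℝ) = 0 := by norm_num [h1]
      rw [hval]
      apply hasDerivAt_of_left_right
      · have hd : HasDerivWithinAt (fun r : ℝ => (6 * r ^ 3 + 8 * r ^ 4 + 3 * r ^ 5) ^ 2)
            (0 : ℝ) (Iic (0 : ℝ)) 0 := by
          have := (hasDerivAt_P (0 : ℝ)).hasDerivWithinAt (s := Iic (0 : ℝ))
          (convert this using 1 <;> try rfl); norm_num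
        apply hd.congr_of_eventuallyEq
        · have hmem : Ioc (-1 : ℝ) 0 ∈ nhdsWithin (0 : ℝ) (Iic (0 : ℝ)) :=
            Ioc_mem_nhdsLE_of_mem ⟨by norm_num, le_refl _⟩
          filter_upwards [hmem] with r hr
          exact h_eq_P hr.1.le hr.2
        · norm_num [h]
      · apply (hasDerivWithinAt_const (0:ℝ) (Ici (0:ℝ)) (0:ℝ)).congr_of_eventuallyEq
        · filter_upwards [self_mem_nhdsWithin] with r hr
          exact h_zero_of_nonneg hr
        · exact h_zero_of_nonneg le_rfl
    · -- x > 0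
      have heq : h =ᶠ[nhds x] (fun _ : ℝ => (0:ℝ)) := by
        filter_upwards [Ioi_mem_nhds hx0] with r hr
        exact h_zero_of_nonneg hr.le
      have hval : h1 x = 0 := h1_zero_of_nonneg hx0.le
      rw [hval]
      exact (hasDerivAt_const x (0:ℝ)).congr_of_eventuallyEq heq

lemma hB (x : ℝ) : HasDerivAt h1 (h2 x) x := by
  rcases lt_trichotomy x (-1) with hx | hx | hx
  · have heq : h1 =ᶠ[nhds x] (fun r : ℝ => 2 * r) := by
      filter_upwards [Iio_mem_nhds hx] with r hr
      exact h1_eq_lin (le_of_lt hr)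
    have : HasDerivAt (fun r : ℝ => 2 * r) (h2 x) x := by
      have := (hasDerivAt_id x).const_mul (2:ℝ)
      convert this using 1 <;> try rfl
      unfold h2; rw [if_pos (le_of_lt hx)]; norm_num
    exact this.congr_of_eventuallyEq heq
  · subst hx
    have hval : h2 (-1 : ℝ) = 2 := by norm_num [h2]
    rw [hval]
    apply hasDerivAt_of_left_right
    · have hd : HasDerivWithinAt (fun r : ℝ => 2 * r) (2 : ℝ) (Iic (-1 : ℝ)) (-1) := by
        have := ((hasDerivAt_id (-1:ℝ)).const_mul (2:ℝ)).hasDerivWithinAt (s := Iic (-1 : ℝ))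
        (convert this using 1 <;> try rfl); norm_num
      apply hd.congr_of_eventuallyEq
      · filter_upwards [self_mem_nhdsWithin] with r hr
        exact h1_eq_lin hr
      · norm_num [h1]
    · have hd : HasDerivWithinAt
          (fun r : ℝ => 2 * (6 * r ^ 3 + 8 * r ^ 4 + 3 * r ^ 5) * (18 * r ^ 2 + 32 * r ^ 3 + 15 * r ^ 4))
          (2 : ℝ) (Ici (-1 : ℝ)) (-1) := by
        have := (hasDerivAt_P' (-1 : ℝ)).hasDerivWithinAt (s := Ici (-1 : ℝ))
        (convert this using 1 <;> try rfl); norm_num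
      apply hd.congr_of_eventuallyEq
      · have hmem : Ico (-1 : ℝ) 0 ∈ nhdsWithin (-1 : ℝ) (Ici (-1 : ℝ)) :=
          Ico_mem_nhdsGE (by norm_num)
        filter_upwards [hmem] with r hr
        exact h1_eq_P' hr.1 hr.2.le
      · norm_num [h1]
  · rcases lt_trichotomy x 0 with hx0 | hx0 | hx0
    · have heq : h1 =ᶠ[nhds x]
          (fun r : ℝ => 2 * (6 * r ^ 3 + 8 * r ^ 4 + 3 * r ^ 5) * (18 * r ^ 2 + 32 * r ^ 3 + 15 * r ^ 4)) := by
        filter_upwards [Ioo_mem_nhds hx hx0] with r hr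
        exact h1_eq_P' hr.1.le hr.2.le
      have : HasDerivAt
          (fun r : ℝ => 2 * (6 * r ^ 3 + 8 * r ^ 4 + 3 * r ^ 5) * (18 * r ^ 2 + 32 * r ^ 3 + 15 * r ^ 4))
          (h2 x) x := by
        have := hasDerivAt_P' x
        convert this using 1 <;> try rfl
        simp only [h2, if_neg (by linarith : ¬ x ≤ -1), if_pos hx0]
      exact this.congr_of_eventuallyEq heq
    · subst hx0
      have hval : h2 (0 : ℝ) = 0 := by norm_num [h2]
      rw [hval]
      apply hasDerivAt_of_left_right
      · have hd : HasDerivWithinAt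
            (fun r : ℝ => 2 * (6 * r ^ 3 + 8 * r ^ 4 + 3 * r ^ 5) * (18 * r ^ 2 + 32 * r ^ 3 + 15 * r ^ 4))
            (0 : ℝ) (Iic (0 : ℝ)) 0 := by
          have := (hasDerivAt_P' (0 : ℝ)).hasDerivWithinAt (s := Iic (0 : ℝ))
          (convert this using 1 <;> try rfl); norm_num
        apply hd.congr_of_eventuallyEq
        · have hmem : Ioc (-1 : ℝ) 0 ∈ nhdsWithin (0 : ℝ) (Iic (0 : ℝ)) :=
            Ioc_mem_nhdsLE_of_mem ⟨by norm_num, le_refl _⟩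
          filter_upwards [hmem] with r hr
          exact h1_eq_P' hr.1.le hr.2
        · norm_num [h1]
      · apply (hasDerivWithinAt_const (0:ℝ) (Ici (0:ℝ)) (0:ℝ)).congr_of_eventuallyEq
        · filter_upwards [self_mem_nhdsWithin] with r hr
          exact h1_zero_of_nonneg hr
        · exact h1_zero_of_nonneg le_rfl
    · have heq : h1 =ᶠ[nhds x] (fun _ : ℝ => (0:ℝ)) := by
        filter_upwards [Ioi_mem_nhds hx0] with r hr
        exact h1_zero_of_nonneg hr.le
      have hval : h2 x = 0 := by
        simp [h2, not_le.mpr (by linarith : (-1:ℝ) < x), not_lt.mpr hx0.le]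
      rw [hval]
      exact (hasDerivAt_const x (0:ℝ)).congr_of_eventuallyEq heq

lemma h2_bound (x : ℝ) : |h2 x| ≤ 15000 := by
  unfold h2
  split_ifs with hA hB
  · rw [abs_of_nonneg (by norm_num)]; norm_num
  · push_neg at hA
    have b2 : x ^ 2 ≤ 1 := by nlinarith
    have b2' : 0 ≤ x ^ 2 := sq_nonneg x
    have b3 : -1 ≤ x ^ 3 := by nlinarith
    have b3' : x ^ 3 ≤ 0 := by nlinarith
    have b4 : x ^ 4 ≤ 1 := by nlinarith
    have b4' : 0 ≤ x ^ 4 := by positivity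
    have b5 : -1 ≤ x ^ 5 := by nlinarith
    have b5' : x ^ 5 ≤ 0 := by nlinarith
    have b6 : x ^ 6 ≤ 1 := by nlinarith
    have b6' : 0 ≤ x ^ 6 := by positivity
    have b7 : -1 ≤ x ^ 7 := by nlinarith
    have b7' : x ^ 7 ≤ 0 := by nlinarith
    have b8 : x ^ 8 ≤ 1 := by nlinarith
    have b8' : 0 ≤ x ^ 8 := by positivity
    rw [abs_le]
    constructor <;> nlinarith
  · simp

lemma key (ε : ℝ) (hε : 0 < ε) (r : ℝ) :
    deriv (deriv (hEps ε)) r = h2 (r / ε) := by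
  have hne : ε ≠ 0 := ne_of_gt hε
  have hfirst : deriv (hEps ε) = fun r : ℝ => ε * h1 (r / ε) := by
    funext s
    have hdiv : HasDerivAt (fun t : ℝ => t / ε) (1 / ε) s := by
      simpa using (hasDerivAt_id s).div_const ε
    have hcomp : HasDerivAt (fun t : ℝ => h (t / ε)) (h1 (s / ε) * (1 / ε)) s :=
      by have := (hA (s / ε)).comp s hdiv; exact this
    have : HasDerivAt (hEps ε) (ε ^ 2 * (h1 (s / ε) * (1 / ε))) s := hcomp.const_mul (ε ^ 2)
    rw [this.deriv]
    field_simp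
  rw [hfirst]
  have hdiv : HasDerivAt (fun t : ℝ => t / ε) (1 / ε) r := by
    simpa using (hasDerivAt_id r).div_const ε
  have hcomp : HasDerivAt (fun t : ℝ => h1 (t / ε)) (h2 (r / ε) * (1 / ε)) r :=
    by have := (hB (r / ε)).comp r hdiv; exact this
  have : HasDerivAt (fun t : ℝ => ε * h1 (t / ε)) (ε * (h2 (r / ε) * (1 / ε))) r :=
    hcomp.const_mul ε
  rw [this.deriv]
  field_simp

theorem stmt_8 :
    (∃ C : ℝ, ∀ ε : ℝ, 0 < ε → ∀ r : ℝ, |deriv (deriv (hEps ε)) r| ≤ C) ∧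
    (∀ r : ℝ, r < 0 →
      Tendsto (fun ε : ℝ => deriv (deriv (hEps ε)) r)
        (nhdsWithin 0 (Set.Ioi 0)) (nhds 2)) ∧
    (∀ r : ℝ, 0 < r → ∀ ε : ℝ, 0 < ε → deriv (deriv (hEps ε)) r = 0) := by
  refine ⟨⟨15000, fun ε hε r => ?_⟩, fun r hr => ?_, fun r hr ε hε => ?_⟩
  · rw [key ε hε r]; exact h2_bound _
  · have hev : (fun ε : ℝ => deriv (deriv (hEps ε)) r) =ᶠ[nhdsWithin 0 (Set.Ioi 0)]
        (fun _ => (2:ℝ)) := by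
      have hmem : Set.Ioo (0:ℝ) (-r) ∈ nhdsWithin (0:ℝ) (Set.Ioi 0) :=
        Ioo_mem_nhdsGT_of_mem ⟨le_refl _, by linarith⟩
      filter_upwards [hmem] with ε hε
      rw [key ε hε.1 r]
      have hle : r / ε ≤ -1 := by
        rw [div_le_iff₀ hε.1]
        linarith [hε.2]
      unfold h2; rw [if_pos hle]
    exact Tendsto.congr' hev.symm tendsto_const_nhds
  · rw [key ε hε r]
    have : (0:ℝ) < r / ε := div_pos hr hε
    simp [h2, not_le.mpr (by linarith : (-1:ℝ) < r/ε), not_lt.mpr this.le]
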